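/- arXiv:1312.5722 — 2 statements merged into one kernel-verified Lean document; each statement's English description precedes it below -/
import Mathlib

section
/- Let α be a type and R ⊆ FreeGroup α a set of relators. Then any two elements of the normal closure of R are connected by a finite sequence of elementary moves; that is, for all u, v ∈ Subgroup.normalClosure R, Relation.ReflTransGen step_R u v holds. -/
/-!
The words `v` that can be appended to every word `w` by elementary moves form a
subgroup. It contains `R` (one insertion move) and is normal: to append `g * v * g⁻¹`,
conjugate `w` by `g⁻¹`, append `v`, and conjugate back by `g`, conjugation by an
arbitrary `g` being a chain of conjugations by generators. Hence it contains the normal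
closure of `R`, and `v = u * (u⁻¹ * v)` is reached from `u`.
-/

/-- The elementary-move relation: `z` is obtained from `w` either by a
conjugation move by a generator (or its inverse), or by appending a relator
or an inverse relator on the right. -/
def StepR {α : Type*} (R : Set (FreeGroup α)) (w z : FreeGroup α) : Prop :=
  (∃ a : α, z = FreeGroup.of a * w * (FreeGroup.of a)⁻¹ ∨
    z = (FreeGroup.of a)⁻¹ * w * FreeGroup.of a) ∨
  (∃ t : FreeGroup α, (t ∈ R ∨ t⁻¹ ∈ R) ∧ z = w * t)

open Relation

namespace StepR

variable {α : Type*} {R : Set (FreeGroup α)}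

instance : Std.Symm (StepR R) where
  symm w z := by
    rintro (⟨a, h | h⟩ | ⟨t, ht, h⟩)
    · exact Or.inl ⟨a, Or.inr (by rw [h]; group)⟩
    · exact Or.inl ⟨a, Or.inl (by rw [h]; group)⟩
    · exact Or.inr ⟨t⁻¹, by rwa [inv_inv, or_comm], by rw [h]; group⟩

theorem reflTransGen_conj (g w : FreeGroup α) :
    ReflTransGen (StepR R) w (g * w * g⁻¹) := by
  induction g using FreeGroup.induction_on generalizing w with
  | C1 => simpa using ReflTransGen.refl
  | of a => exact .single (Or.inl ⟨a, Or.inl rfl⟩)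
  | inv_of a _ => rw [inv_inv]; exact .single (Or.inl ⟨a, Or.inr rfl⟩)
  | mul x y hx hy =>
    have hxy : x * (y * w * y⁻¹) * x⁻¹ = x * y * w * (x * y)⁻¹ := by group
    exact (hy w).trans (hxy ▸ hx _)

variable (R) in
def appendable : Subgroup (FreeGroup α) where
  carrier := {v | ∀ w, ReflTransGen (StepR R) w (w * v)}
  one_mem' w := by simpa using ReflTransGen.refl
  mul_mem' {x y} hx hy w := mul_assoc w x y ▸ (hx w).trans (hy (w * x))
  inv_mem' {x} hx w := symm (by simpa using hx (w * x⁻¹))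

instance : (appendable R).Normal where
  conj_mem v hv g w := by
    have hconj : g * (g⁻¹ * w * g⁻¹⁻¹ * v) * g⁻¹ = w * (g * v * g⁻¹) := by group
    exact ((reflTransGen_conj g⁻¹ w).trans (hv _)).trans (hconj ▸ reflTransGen_conj g _)

theorem subset_appendable : R ⊆ appendable R :=
  fun r hr _ => .single (Or.inr ⟨r, Or.inl hr, rfl⟩)

theorem normalClosure_le_appendable : Subgroup.normalClosure R ≤ appendable R :=
  Subgroup.normalClosure_le_normal subset_appendable

end StepR

/-- Any two elements of the normal closure of the relator set `R` are
connected by a finite sequence of elementary moves. -/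
theorem connected_in_normal_closure {α : Type*} (R : Set (FreeGroup α)) :
    ∀ u ∈ Subgroup.normalClosure R, ∀ v ∈ Subgroup.normalClosure R,
      Relation.ReflTransGen (StepR R) u v := by
  intro u hu v hv
  have hquot : u⁻¹ * v ∈ StepR.appendable R :=
    StepR.normalClosure_le_appendable (Subgroup.mul_mem _ (Subgroup.inv_mem _ hu) hv)
  simpa using hquot u
end

section
/- Let α be a type and R ⊆ FreeGroup α a set of relators with 1 ∉ R. Let r, s : FreeGroup α satisfy (r ∈ R or r⁻¹ ∈ R) and (s ∈ R or s⁻¹ ∈ R), and suppose s ≠ r⁻¹. Then r can be transformed to s by a finite sequence of elementary moves that never passes through the identity: Relation.ReflTransGen step01_R r s holds. -/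
/-- The identity-avoiding elementary-move relation. -/
def Step01R {α : Type*} (R : Set (FreeGroup α)) (w z : FreeGroup α) : Prop :=
  z ≠ 1 ∧ StepR R w z

namespace Step01R

variable {α : Type*} (R : Set (FreeGroup α))

theorem mul_relator {w t : FreeGroup α} (ht : t ∈ R ∨ t⁻¹ ∈ R) (hwt : w * t ≠ 1) :
    Step01R R w (w * t) :=
  ⟨hwt, Or.inr ⟨t, ht, rfl⟩⟩

theorem reflTransGen_conj (g : FreeGroup α) {w : FreeGroup α} (hw : w ≠ 1) :
    Relation.ReflTransGen (Step01R R) w (g * w * g⁻¹) := by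
  induction g using FreeGroup.induction_on generalizing w with
  | C1 => simpa using .refl
  | of a => exact .single ⟨mt conj_eq_one_iff.1 hw, Or.inl ⟨a, Or.inl rfl⟩⟩
  | inv_of a _ =>
    refine .single ⟨mt conj_eq_one_iff.1 hw, Or.inl ⟨a, Or.inr ?_⟩⟩
    rw [inv_inv]
  | mul x y ihx ihy =>
    simpa only [mul_inv_rev, mul_assoc] using (ihy hw).trans (ihx (mt conj_eq_one_iff.1 hw))

end Step01R

/-- If `1 ∉ R`, any relator or inverse relator `r` can be transformed to any
relator or inverse relator `s ≠ r⁻¹` by a finite sequence of elementary moves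
avoiding the identity. -/
theorem relator_to_relator {α : Type*} (R : Set (FreeGroup α))
    (h1R : (1 : FreeGroup α) ∉ R) (r s : FreeGroup α)
    (hr : r ∈ R ∨ r⁻¹ ∈ R) (hs : s ∈ R ∨ s⁻¹ ∈ R) (hsr : s ≠ r⁻¹) :
    Relation.ReflTransGen (Step01R R) r s := by
  have hs1 : s ≠ 1 := by
    rintro rfl
    exact h1R (by simpa using hs)
  have hrs : r * s ≠ 1 := fun h => hsr (inv_eq_of_mul_eq_one_right h).symm
  have hrinv : r⁻¹ ∈ R ∨ r⁻¹⁻¹ ∈ R := by rwa [inv_inv, or_comm]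
  have to_rs : Relation.ReflTransGen (Step01R R) r (r * s) :=
    .single (Step01R.mul_relator R hs hrs)
  have rs_to_sr : Relation.ReflTransGen (Step01R R) (r * s) (s * r) := by
    simpa [mul_assoc] using Step01R.reflTransGen_conj R r⁻¹ hrs
  have sr_to_s : Relation.ReflTransGen (Step01R R) (s * r) s := by
    simpa using Relation.ReflTransGen.single
      (Step01R.mul_relator R hrinv (by simpa using hs1) : Step01R R (s * r) (s * r * r⁻¹))
  exact to_rs.trans (rs_to_sr.trans sr_to_s)
end
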